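/- Let R be a commutative ring, let 𝓜 be a class of R-modules, and suppose there is a set S of R-modules with S ⊆ 𝓜 such that every M ∈ 𝓜 is a transfinite extension of modules in S (i.e., M admits an ordinal-indexed increasing continuous filtration by submodules starting at 0 and ending at M whose successive quotients are isomorphic to modules in S). Set M' = ⊕_{N ∈ S} N. Then for any ℤ-indexed chain complex X of injective R-modules: the complex Hom_R(M, X) is exact for every M ∈ 𝓜 if and only if the complex Hom_R(M', X) is exact. -/

import Mathlib

open CategoryTheory

universe w u

/-- The chain complex of abelian groups `Hom_R(M, X)` induced by a chain complex `X`. -/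
noncomputable def homFromComplex (R : Type u) [CommRing R] (M : ModuleCat.{u} R)
    (X : ChainComplex (ModuleCat.{u} R) ℤ) : ChainComplex AddCommGrpCat.{u} ℤ :=
  ((preadditiveCoyoneda.obj (Opposite.op M)).mapHomologicalComplex _).obj X

/-- A complex is exact if its homology vanishes in every degree. -/
def ComplexExact {V : Type*} [Category V] [Limits.HasZeroMorphisms V] {ι : Type*}
    {c : ComplexShape ι} (X : HomologicalComplex V c) : Prop :=
  ∀ n, X.ExactAt n

/-- `M` is a transfinite extension of modules in the family `S`: there is an ordinal-indexed
increasing continuous filtration of `M` by submodules, starting at `0` and ending at `M`,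
whose successive quotients are isomorphic to modules in `S`. -/
def IsTransfiniteExtensionOf (R : Type u) [CommRing R] {ι : Type u}
    (S : ι → ModuleCat.{u} R) (M : ModuleCat.{u} R) : Prop :=
  ∃ (lam : Ordinal.{u}) (F : Ordinal.{u} → Submodule R M),
    F 0 = ⊥ ∧ F lam = ⊤ ∧
    (∀ α β : Ordinal.{u}, α ≤ β → β ≤ lam → F α ≤ F β) ∧
    (∀ β : Ordinal.{u}, β ≤ lam → Order.IsSuccLimit β →
      F β = ⨆ (α : Ordinal.{u}) (_ : α < β), F α) ∧
    (∀ α : Ordinal.{u}, α < lam → ∃ i : ι, Nonempty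
      ((↥(F (α + 1)) ⧸ Submodule.comap (F (α + 1)).subtype (F α)) ≃ₗ[R] S i))

/-!
Exactness of `Hom_R(M, X)` at `n` says that every map `M → Z_n(X)` into the cycles lifts along
`d : X_{n+1} → Z_n(X)`. This lifting property holds for a direct sum iff it holds for every
summand, which gives one direction. For the other, it passes to transfinite extensions (an
Eklof-type argument): a lift on `F α` extends to `F (α + 1)` by injectivity of `X_{n+1}`, the
error vanishes on `F α` and is corrected by a lift from `F (α + 1) / F α`, and at limit stages
the lifts glue. Zorn's lemma on pairs (stage, partial lift) organises the recursion.
-/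

universe v

section LiftsAlong

variable {R : Type*} [Ring R] {A B : Type*} [AddCommGroup A] [Module R A]
  [AddCommGroup B] [Module R B]

def LiftsAlong (N : Type*) [AddCommGroup N] [Module R N] (p : B →ₗ[R] A) : Prop :=
  ∀ f : N →ₗ[R] A, ∃ g : N →ₗ[R] B, p ∘ₗ g = f

variable {p : B →ₗ[R] A}

theorem LiftsAlong.of_linearEquiv {N N' : Type*} [AddCommGroup N] [Module R N]
    [AddCommGroup N'] [Module R N'] (e : N ≃ₗ[R] N') (h : LiftsAlong N' p) :
    LiftsAlong N p := fun f => by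
  obtain ⟨g, hg⟩ := h (f ∘ₗ e.symm.toLinearMap)
  refine ⟨g ∘ₗ e.toLinearMap, ?_⟩
  rw [← LinearMap.comp_assoc, hg, LinearMap.comp_assoc, e.symm_comp, LinearMap.comp_id]

theorem liftsAlong_directSum_iff {ι : Type*} {N : ι → Type*} [∀ i, AddCommGroup (N i)]
    [∀ i, Module R (N i)] : LiftsAlong (DirectSum ι N) p ↔ ∀ i, LiftsAlong (N i) p := by
  classical
  constructor
  · intro h i f
    obtain ⟨g, hg⟩ := h (f ∘ₗ DirectSum.component R ι N i)
    refine ⟨g ∘ₗ DirectSum.lof R ι N i, ?_⟩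
    rw [← LinearMap.comp_assoc, hg, LinearMap.comp_assoc, DirectSum.component_comp_lof_same,
      LinearMap.comp_id]
  · intro h f
    choose g hg using fun i => h i (f ∘ₗ DirectSum.lof R ι N i)
    refine ⟨DirectSum.toModule R ι B g, DirectSum.linearMap_ext R fun i => ?_⟩
    ext x
    simpa using LinearMap.congr_fun (hg i) x

end LiftsAlong

section PartialLifts

variable {R : Type*} [Ring R] {M A : Type*} {B : Type v} [AddCommGroup M] [Module R M]
  [AddCommGroup A] [Module R A] [AddCommGroup B] [Module R B] (p : B →ₗ[R] A) (f : M →ₗ[R] A)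

def IsPartialLift (g : M →ₗ.[R] B) : Prop :=
  ∀ x : g.domain, p (g x) = f x

variable {p f}

theorem isPartialLift_sSup {c : Set (M →ₗ.[R] B)} (hne : c.Nonempty) (hc : DirectedOn (· ≤ ·) c)
    (h : ∀ g ∈ c, IsPartialLift p f g) : IsPartialLift p f (LinearPMap.sSup c hc) := by
  rintro ⟨x, hx⟩
  obtain ⟨g, hgc, hxg⟩ := (LinearPMap.mem_domain_sSup_iff hne hc).1 hx
  rw [LinearPMap.sSup_apply hc hgc ⟨x, hxg⟩]
  exact h g hgc ⟨x, hxg⟩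

theorem IsPartialLift.exists_extension [Small.{v} R] [Module.Injective R B]
    {g : M →ₗ.[R] B} (hg : IsPartialLift p f g) {Q : Submodule R M} (hQ : g.domain ≤ Q)
    (hquot : LiftsAlong (Q ⧸ g.domain.comap Q.subtype) p) :
    ∃ g' : M →ₗ.[R] B, g'.domain = Q ∧ g ≤ g' ∧ IsPartialLift p f g' := by
  obtain ⟨e, he⟩ := Module.Injective.extension_property R B _ _
    (Submodule.inclusion hQ) (Submodule.inclusion_injective hQ) g.toFun
  set K := g.domain.comap Q.subtype
  -- `f - p ∘ e` vanishes on `g.domain`, so it descends to `Q / g.domain`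
  have hK : K ≤ LinearMap.ker (f ∘ₗ Q.subtype - p ∘ₗ e) := fun y hy => by
    have he' : e y = g ⟨y, hy⟩ := LinearMap.congr_fun he ⟨y, hy⟩
    simp [he', hg ⟨y, hy⟩]
  obtain ⟨k, hk⟩ := hquot (K.liftQ _ hK)
  refine ⟨⟨Q, e + k ∘ₗ K.mkQ⟩, rfl, ⟨hQ, fun x y hxy => ?_⟩, fun y => ?_⟩
  · have hyK : y ∈ K := show (y : M) ∈ g.domain from hxy ▸ x.2
    have hey : e y = g x :=
      (congrArg e (Subtype.ext hxy.symm)).trans (LinearMap.congr_fun he x)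
    simp [(Submodule.Quotient.mk_eq_zero K).2 hyK, hey]
  · have hky : p (k (Submodule.Quotient.mk y)) = f y - p (e y) :=
      LinearMap.congr_fun hk (K.mkQ y)
    simp [hky]

end PartialLifts

theorem sSup_image_eq_of_continuous {R M : Type*} [Semiring R] [AddCommMonoid M] [Module R M]
    {lam : Ordinal.{w}} {F : Ordinal.{w} → Submodule R M}
    (hmono : ∀ α β : Ordinal.{w}, α ≤ β → β ≤ lam → F α ≤ F β)
    (hcont : ∀ β : Ordinal.{w}, β ≤ lam → Order.IsSuccLimit β →
      F β = ⨆ (α : Ordinal.{w}) (_ : α < β), F α)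
    {s : Set Ordinal.{w}} (hne : s.Nonempty) (hs : ∀ a ∈ s, a ≤ lam) :
    sSup (F '' s) = F (sSup s) := by
  have hbdd : BddAbove s := ⟨lam, hs⟩
  have hle : sSup s ≤ lam := csSup_le hne hs
  refine le_antisymm (sSup_le ?_) ?_
  · rintro _ ⟨a, ha, rfl⟩
    exact hmono _ _ (le_csSup hbdd ha) hle
  by_cases hlim : Order.IsSuccLimit (sSup s)
  · rw [hcont _ hle hlim]
    refine iSup₂_le fun α hα => ?_
    obtain ⟨a, ha, hαa⟩ := exists_lt_of_lt_csSup hne hα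
    exact (hmono _ _ hαa.le (hs a ha)).trans (le_sSup (Set.mem_image_of_mem F ha))
  · exact le_sSup (Set.mem_image_of_mem F (csSup_mem_of_not_isSuccLimit hne hbdd hlim))

section Filtration

variable {R M A : Type*} {B : Type v} [Ring R] [AddCommGroup M] [Module R M] [AddCommGroup A]
  [Module R A] [AddCommGroup B] [Module R B] (p : B →ₗ[R] A) (f : M →ₗ[R] A)
  (lam : Ordinal.{w}) (F : Ordinal.{w} → Submodule R M)

def stageLifts : Set (Ordinal.{w} × (M →ₗ.[R] B)) :=
  {q | q.1 ≤ lam ∧ q.2.domain = F q.1 ∧ IsPartialLift p f q.2}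

variable {p f lam F}

theorem exists_ub_of_isChain_stageLifts
    (hmono : ∀ α β : Ordinal.{w}, α ≤ β → β ≤ lam → F α ≤ F β)
    (hcont : ∀ β : Ordinal.{w}, β ≤ lam → Order.IsSuccLimit β →
      F β = ⨆ (α : Ordinal.{w}) (_ : α < β), F α)
    {c : Set (Ordinal.{w} × (M →ₗ.[R] B))} (hcs : c ⊆ stageLifts p f lam F)
    (hc : IsChain (· ≤ ·) c) (hne : c.Nonempty) :
    ∃ ub ∈ stageLifts p f lam F, ∀ z ∈ c, z ≤ ub := by
  have hdir : DirectedOn (· ≤ ·) (Prod.snd '' c) :=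
    directedOn_image.2 (hc.directedOn.mono fun _ _ h => h.2)
  have hlam : ∀ a ∈ Prod.fst '' c, a ≤ lam := by
    rintro _ ⟨z, hz, rfl⟩
    exact (hcs hz).1
  refine ⟨(sSup (Prod.fst '' c), LinearPMap.sSup _ hdir),
    ⟨csSup_le (hne.image _) hlam, ?_, ?_⟩,
    fun z hz => ⟨le_csSup ⟨lam, hlam⟩ (Set.mem_image_of_mem _ hz),
      LinearPMap.le_sSup hdir (Set.mem_image_of_mem _ hz)⟩⟩
  · rw [LinearPMap.domain_sSup, ← sSup_image_eq_of_continuous hmono hcont (hne.image _) hlam,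
      Set.image_image, Set.image_image]
    exact congrArg sSup (Set.image_congr fun z hz => (hcs hz).2.1)
  · refine isPartialLift_sSup (hne.image _) hdir ?_
    rintro _ ⟨z, hz, rfl⟩
    exact (hcs hz).2.2

theorem liftsAlong_of_filtration [Small.{v} R] [Module.Injective R B]
    (hbot : F 0 = ⊥) (htop : F lam = ⊤)
    (hmono : ∀ α β : Ordinal.{w}, α ≤ β → β ≤ lam → F α ≤ F β)
    (hcont : ∀ β : Ordinal.{w}, β ≤ lam → Order.IsSuccLimit β →
      F β = ⨆ (α : Ordinal.{w}) (_ : α < β), F α)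
    (hstep : ∀ α < lam, LiftsAlong (F (α + 1) ⧸ (F α).comap (F (α + 1)).subtype) p) :
    LiftsAlong M p := by
  intro f
  have h0 : ((0 : Ordinal.{w}), (⟨F 0, 0⟩ : M →ₗ.[R] B)) ∈ stageLifts p f lam F := by
    refine ⟨zero_le, rfl, ?_⟩
    rintro ⟨x, hx⟩
    rw [hbot, Submodule.mem_bot] at hx
    simp [hx]
  obtain ⟨⟨a, g⟩, -, ⟨ha, hdom, hg⟩, hmax⟩ := zorn_le_nonempty₀ _
    (fun c hcs hc q hq => exists_ub_of_isChain_stageLifts hmono hcont hcs hc ⟨q, hq⟩) _ h0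
  obtain rfl : a = lam := by
    by_contra hne
    have hlt := ha.lt_of_ne hne
    have hsucc : a < a + 1 := Order.lt_add_one_iff.2 le_rfl
    obtain ⟨g', hdom', hgg', hg'⟩ := hg.exists_extension
      (hdom ▸ hmono _ _ hsucc.le (Order.add_one_le_of_lt hlt)) (hdom ▸ hstep a hlt)
    exact hsucc.not_ge
      (@hmax (a + 1, g') ⟨Order.add_one_le_of_lt hlt, hdom', hg'⟩ ⟨hsucc.le, hgg'⟩).1
  have htop' : g.domain = ⊤ := hdom.trans htop
  exact ⟨g.toFun ∘ₗ LinearMap.id.codRestrict g.domain (fun _ => htop' ▸ trivial),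
    LinearMap.ext fun x => hg ⟨x, _⟩⟩

end Filtration

section Complex

variable {R : Type u} [CommRing R] (X : ChainComplex (ModuleCat.{u} R) ℤ)

theorem exactAt_homFromComplex_iff_forall_comp_eq (M : ModuleCat.{u} R) (n : ℤ) :
    (homFromComplex R M X).ExactAt n ↔ ∀ φ : M ⟶ X.X n, φ ≫ X.d n (n - 1) = 0 →
      ∃ ψ : M ⟶ X.X (n + 1), ψ ≫ X.d (n + 1) n = φ := by
  rw [HomologicalComplex.exactAt_iff' _ (n + 1) n (n - 1) (by simp) (by simp),
    ShortComplex.ab_exact_iff]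
  rfl

def dToKer (n : ℤ) : X.X (n + 1) →ₗ[R] LinearMap.ker (X.d n (n - 1)).hom :=
  (X.d (n + 1) n).hom.codRestrict _ fun b => by
    rw [LinearMap.mem_ker, ← ModuleCat.comp_apply, X.d_comp_d]
    rfl

theorem exactAt_homFromComplex_iff (M : ModuleCat.{u} R) (n : ℤ) :
    (homFromComplex R M X).ExactAt n ↔ LiftsAlong M (dToKer X n) := by
  rw [exactAt_homFromComplex_iff_forall_comp_eq]
  constructor
  · intro h f
    obtain ⟨ψ, hψ⟩ := h (ModuleCat.ofHom ((LinearMap.ker _).subtype ∘ₗ f)) (by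
      ext x
      exact (f x).2)
    exact ⟨ψ.hom, LinearMap.ext fun x => Subtype.ext congr(($hψ).hom x)⟩
  · intro h φ hφ
    obtain ⟨g, hg⟩ := h (φ.hom.codRestrict _ fun x => congr(($hφ).hom x))
    exact ⟨ModuleCat.ofHom g, by ext x; exact congr(($hg x).1)⟩

end Complex

theorem homFromComplex_exact_iff_of_transfinite_extensions
    (R : Type u) [CommRing R] (Mc : ModuleCat.{u} R → Prop)
    (ι : Type u) (S : ι → ModuleCat.{u} R) (hS : ∀ i, Mc (S i))
    (hfilt : ∀ M : ModuleCat.{u} R, Mc M → IsTransfiniteExtensionOf R S M)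
    (X : ChainComplex (ModuleCat.{u} R) ℤ) (hX : ∀ n, Injective (X.X n)) :
    (∀ M : ModuleCat.{u} R, Mc M → ComplexExact (homFromComplex R M X)) ↔
    ComplexExact (homFromComplex R (ModuleCat.of R (DirectSum ι (fun i => S i))) X) := by
  simp only [ComplexExact, exactAt_homFromComplex_iff]
  refine ⟨fun h n => liftsAlong_directSum_iff.2 fun i => h _ (hS i) n, fun h M hM n => ?_⟩
  have : Module.Injective R (X.X (n + 1)) := (Module.injective_iff_injective_object R _).2 (hX _)
  obtain ⟨lam, F, hbot, htop, hmono, hcont, hquot⟩ := hfilt M hM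
  refine liftsAlong_of_filtration hbot htop hmono hcont fun α hα => ?_
  obtain ⟨i, ⟨e⟩⟩ := hquot α hα
  exact (liftsAlong_directSum_iff.1 (h n) i).of_linearEquiv e
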